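/- arXiv:2308.03715 — 2 statements merged into one kernel-verified Lean document; each statement's English description precedes it below -/
import Mathlib

section
/- For every n with 2 ≤ n ≤ N+1, the L1 coefficients are monotone in the second index: T̂_{n,j} ≥ T̂_{n,j−1} for all j with 2 ≤ j ≤ n−1. -/
/-! `T̂_{n,j} Γ(2 - α)` is minus the slope of the concave function `x ↦ (t_n - x) ^ (1 - α)` over
`[t_j, t_{j+1}]`. The mesh is increasing, so these intervals lie left to right, and the slopes of a
concave function decrease. -/

/-- Graded temporal mesh `t_n = T ((n-1)/N)^r`. -/
noncomputable def tmesh (T r : ℝ) (N n : ℕ) : ℝ := T * (((n : ℝ) - 1) / (N : ℝ)) ^ r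

/-- Step sizes `τ_n = t_{n+1} - t_n`. -/
noncomputable def tau (T r : ℝ) (N n : ℕ) : ℝ := tmesh T r N (n + 1) - tmesh T r N n

/-- L1 coefficients `T̂_{n,j}` (with the convention `T̂_{n,0} = 0`). -/
noncomputable def That (α T r : ℝ) (N n j : ℕ) : ℝ :=
  if j = 0 then 0 else
    ((tmesh T r N n - tmesh T r N j) ^ (1 - α) -
        (tmesh T r N n - tmesh T r N (j + 1)) ^ (1 - α)) /
      (tau T r N j * Real.Gamma (2 - α))

theorem tmesh_strictMonoOn {T r : ℝ} (hT : 0 < T) (hr : 0 < r) {N : ℕ} (hN : 0 < N) :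
    StrictMonoOn (tmesh T r N) (Set.Ici 1) := by
  intro m hm k _ hmk
  have hm' : (1 : ℝ) ≤ m := by exact_mod_cast hm
  have hmk' : (m : ℝ) < k := by exact_mod_cast hmk
  have hN' : (0 : ℝ) < N := by exact_mod_cast hN
  unfold tmesh
  gcongr

theorem rpow_sub_slope_le {p a b c d : ℝ} (hp0 : 0 ≤ p) (hp1 : p ≤ 1)
    (hab : a < b) (hbc : b < c) (hcd : c ≤ d) :
    ((d - a) ^ p - (d - b) ^ p) / (b - a) ≤ ((d - b) ^ p - (d - c) ^ p) / (c - b) := by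
  have hslope := (Real.concaveOn_rpow hp0 hp1).slope_anti_adjacent
    (show d - c ∈ Set.Ici 0 by simp only [Set.mem_Ici]; linarith)
    (show d - a ∈ Set.Ici 0 by simp only [Set.mem_Ici]; linarith)
    (show d - c < d - b by linarith) (show d - b < d - a by linarith)
  rwa [show d - a - (d - b) = b - a by ring, show d - b - (d - c) = c - b by ring] at hslope

theorem That_monotone_general (α T r : ℝ) (hα : α ∈ Set.Ioo (0 : ℝ) 1) (hT : 0 < T)
    (hr : 1 ≤ r) (N : ℕ) (hN : 0 < N) (n : ℕ) :
    ∀ j, 2 ≤ j → j ≤ n - 1 → That α T r N n (j - 1) ≤ That α T r N n j := by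
  intro j hj2 hjn
  obtain ⟨hα0, hα1⟩ := hα
  have hmono := tmesh_strictMonoOn hT (zero_lt_one.trans_le hr) hN
  have hab : tmesh T r N (j - 1) < tmesh T r N j :=
    hmono (show 1 ≤ j - 1 by omega) (show 1 ≤ j by omega) (by omega)
  have hbc : tmesh T r N j < tmesh T r N (j + 1) :=
    hmono (show 1 ≤ j by omega) (show 1 ≤ j + 1 by omega) (by omega)
  have hcd : tmesh T r N (j + 1) ≤ tmesh T r N n :=
    (hmono.le_iff_le (show 1 ≤ j + 1 by omega) (show 1 ≤ n by omega)).2 (by omega)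
  have hG : 0 < Real.Gamma (2 - α) := Real.Gamma_pos_of_pos (by linarith)
  have hj : j - 1 + 1 = j := by omega
  rw [That, That, if_neg (by omega), if_neg (by omega), tau, tau, hj, ← div_div, ← div_div]
  exact div_le_div_of_nonneg_right (rpow_sub_slope_le (by linarith) (by linarith) hab hbc hcd) hG.le

/-- monotonicity of the L1 coefficients in the second index:
`T̂_{n,j} ≥ T̂_{n,j-1}` for `2 ≤ j ≤ n-1`, `2 ≤ n ≤ N+1`. -/
theorem That_monotone (α T r : ℝ) (hα : α ∈ Set.Ioo (0 : ℝ) 1) (hT : 0 < T)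
    (hr : 1 ≤ r) (N : ℕ) (hN : 0 < N) (n : ℕ) (hn2 : 2 ≤ n) (hnN : n ≤ N + 1) :
    ∀ j, 2 ≤ j → j ≤ n - 1 → That α T r N n (j - 1) ≤ That α T r N n j :=
  That_monotone_general α T r hα hT hr N hN n
end

section
/- Let a ∈ C¹([0,ℓ]) with a > 0, b ∈ C([0,ℓ]) with b ≥ 0, and p ∈ C([0,T]) with p > 0. For 2 ≤ n ≤ N+1 set K^n(y) = p(t_n) a(y) and c^n(y) = p(t_n) b(y) + T̂_{n,n−1}. Suppose broken polynomials u_h^1, …, u_h^{N+1} of degree k satisfy u_h^1 = 0 and, for each n with 2 ≤ n ≤ N+1, the homogeneous fully discrete L1-NIPG scheme B^n(u_h^n, v) = Σ_{m=1}^M ∫_{K_m} (T̂_{n,1} u_h^1 + Σ_{j=2}^{n−1} (T̂_{n,j} − T̂_{n,j−1}) u_h^j) v_m dy for all broken polynomials v of degree k, where B^n is the NIPG bilinear form with coefficients K^n, c^n. Then u_h^n = 0 for every n; in particular the fully discrete L1-NIPG scheme has at most one solution. -/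
/-- Node `y_m = (m-1) h` with `h = ℓ/M`. -/
noncomputable def node (ℓ : ℝ) (M m : ℕ) : ℝ := ((m : ℝ) - 1) * (ℓ / (M : ℝ))

/-- The jump `[v(y_m)]` of a broken polynomial `v = (v_1,…,v_M)` at the node `y_m`. -/
noncomputable def jump (ℓ : ℝ) (M : ℕ) (v : ℕ → Polynomial ℝ) (m : ℕ) : ℝ :=
  if m = 1 then (v 1).eval (node ℓ M 1)
  else if m = M + 1 then -((v M).eval (node ℓ M (M + 1)))
  else (v m).eval (node ℓ M m) - (v (m - 1)).eval (node ℓ M m)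

/-- The average `{v(y_m)}` of a broken polynomial `v = (v_1,…,v_M)` at the node `y_m`. -/
noncomputable def avg (ℓ : ℝ) (M : ℕ) (v : ℕ → Polynomial ℝ) (m : ℕ) : ℝ :=
  if m = 1 then (v 1).eval (node ℓ M 1)
  else if m = M + 1 then (v M).eval (node ℓ M (M + 1))
  else ((v m).eval (node ℓ M m) + (v (m - 1)).eval (node ℓ M m)) / 2

/-- The NIPG bilinear form with coefficients `K`, `c` and penalties `σ_m`:
`B(u,v) = Σ_m ∫_{K_m}(K u' v' + c u v) + Σ_m {K(y_m) u'(y_m)}[v(y_m)]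
  - Σ_m {K(y_m) v'(y_m)}[u(y_m)] + Σ_m σ_m [u(y_m)][v(y_m)]`. -/
noncomputable def nipg (ℓ : ℝ) (M : ℕ) (K c : ℝ → ℝ) (σ : ℕ → ℝ)
    (u v : ℕ → Polynomial ℝ) : ℝ :=
  (∑ m ∈ Finset.Icc 1 M, ∫ y in node ℓ M m..node ℓ M (m + 1),
      (K y * (Polynomial.derivative (u m)).eval y * (Polynomial.derivative (v m)).eval y +
        c y * (u m).eval y * (v m).eval y))
  + (∑ m ∈ Finset.Icc 1 (M + 1),
      K (node ℓ M m) * avg ℓ M (fun i => Polynomial.derivative (u i)) m * jump ℓ M v m)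
  - (∑ m ∈ Finset.Icc 1 (M + 1),
      K (node ℓ M m) * avg ℓ M (fun i => Polynomial.derivative (v i)) m * jump ℓ M u m)
  + (∑ m ∈ Finset.Icc 1 (M + 1), σ m * jump ℓ M u m * jump ℓ M v m)

/-- The broken `L²(0,ℓ)` norm of a broken polynomial. -/
noncomputable def brokenL2 (ℓ : ℝ) (M : ℕ) (v : ℕ → Polynomial ℝ) : ℝ :=
  Real.sqrt (∑ m ∈ Finset.Icc 1 M,
    ∫ y in node ℓ M m..node ℓ M (m + 1), ((v m).eval y) ^ 2)

/-- The `L²(0,ℓ)` norm of a function. -/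
noncomputable def funL2 (ℓ : ℝ) (f : ℝ → ℝ) : ℝ :=
  Real.sqrt (∫ y in (0 : ℝ)..ℓ, (f y) ^ 2)

/-!
By strong induction on `n`, the history term on the right-hand side of the scheme vanishes.
Testing with `v = u_h^n`, the two consistency terms of the NIPG form cancel, leaving
`Σ_m ∫_{K_m} (K u'² + c u²) + Σ_m σ_m [u]² = 0` with every summand nonnegative. Since
`c^n ≥ T̂_{n,n-1} > 0`, a piece `u_m ≠ 0`, being nonzero somewhere on `K_m`, would make its
element integral positive.
-/

open Set

section TimeMesh

variable {α T r : ℝ} {N n : ℕ}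

lemma tmesh_mem_Icc (hT : 0 ≤ T) (hr : 0 ≤ r) (hn₁ : 1 ≤ n) (hn : n ≤ N + 1) :
    tmesh T r N n ∈ Icc 0 T := by
  have h₁ : (1 : ℝ) ≤ n := by exact_mod_cast hn₁
  have h₂ : (n : ℝ) ≤ N + 1 := by exact_mod_cast hn
  have hs₀ : 0 ≤ ((n : ℝ) - 1) / N := div_nonneg (by linarith) N.cast_nonneg
  have hs₁ : ((n : ℝ) - 1) / N ≤ 1 := div_le_one_of_le₀ (by linarith) N.cast_nonneg
  exact ⟨mul_nonneg hT (Real.rpow_nonneg hs₀ r),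
    mul_le_of_le_one_right hT (Real.rpow_le_one hs₀ hs₁ hr)⟩

lemma tau_pos (hT : 0 < T) (hr : 0 < r) (hN : 0 < N) (hn : 1 ≤ n) : 0 < tau T r N n := by
  have hN' : (0 : ℝ) < N := by exact_mod_cast hN
  have h₁ : (1 : ℝ) ≤ n := by exact_mod_cast hn
  have hlt : ((n : ℝ) - 1) / N < (((n + 1 : ℕ) : ℝ) - 1) / N := by
    push_cast
    exact div_lt_div_of_pos_right (by linarith) hN'
  rw [tau, tmesh, tmesh, sub_pos]
  exact mul_lt_mul_of_pos_left
    (Real.rpow_lt_rpow (div_nonneg (by linarith) hN'.le) hlt hr) hT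

/-- Here `T̂_{n,n-1} = τ_{n-1}^{-α} / Γ(2-α)`. -/
lemma That_pred_pos (hα : α < 1) (hT : 0 < T) (hr : 0 < r) (hN : 0 < N) (hn : 2 ≤ n) :
    0 < That α T r N n (n - 1) := by
  have hsucc : n - 1 + 1 = n := by omega
  have hτ : 0 < tau T r N (n - 1) := tau_pos hT hr hN (by omega)
  have hstep : tmesh T r N n - tmesh T r N (n - 1) = tau T r N (n - 1) := by
    rw [tau, hsucc]
  rw [That, if_neg (by omega), hsucc, hstep, sub_self,
    Real.zero_rpow (by linarith : (1 : ℝ) - α ≠ 0), sub_zero]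
  exact div_pos (Real.rpow_pos_of_pos hτ _) (mul_pos hτ (Real.Gamma_pos_of_pos (by linarith)))

end TimeMesh

section SpaceMesh

variable {ℓ : ℝ} {M m : ℕ}

lemma node_lt_node_succ (hℓ : 0 < ℓ) (hM : 0 < M) (m : ℕ) :
    node ℓ M m < node ℓ M (m + 1) := by
  have hh : 0 < ℓ / M := div_pos hℓ (by exact_mod_cast hM)
  rw [node, node]
  push_cast
  linarith

lemma Icc_node_subset (hℓ : 0 < ℓ) (hm : m ∈ Finset.Icc 1 M) :
    Icc (node ℓ M m) (node ℓ M (m + 1)) ⊆ Icc 0 ℓ := by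
  obtain ⟨hm₁, hmM⟩ := Finset.mem_Icc.mp hm
  have hM : (0 : ℝ) < M := by exact_mod_cast hm₁.trans hmM
  have hm₁' : (1 : ℝ) ≤ m := by exact_mod_cast hm₁
  have hmM' : (m : ℝ) ≤ M := by exact_mod_cast hmM
  have hh : 0 < ℓ / M := div_pos hℓ hM
  have hMh : (M : ℝ) * (ℓ / M) = ℓ := by field_simp
  apply Icc_subset_Icc
  · rw [node]; nlinarith
  · rw [node]; push_cast; nlinarith

end SpaceMesh

section NIPG

variable {ℓ : ℝ} {M : ℕ} {K c : ℝ → ℝ} {σ : ℕ → ℝ}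

lemma nipg_self (u : ℕ → Polynomial ℝ) :
    nipg ℓ M K c σ u u =
      (∑ m ∈ Finset.Icc 1 M, ∫ y in node ℓ M m..node ℓ M (m + 1),
          (K y * (Polynomial.derivative (u m)).eval y * (Polynomial.derivative (u m)).eval y +
            c y * (u m).eval y * (u m).eval y))
        + ∑ m ∈ Finset.Icc 1 (M + 1), σ m * jump ℓ M u m * jump ℓ M u m := by
  rw [nipg, add_sub_cancel_right]

lemma eq_zero_of_nipg_self_eq_zero (hℓ : 0 < ℓ)
    (hK : ContinuousOn K (Icc 0 ℓ)) (hKnn : ∀ y ∈ Icc 0 ℓ, 0 ≤ K y)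
    (hc : ContinuousOn c (Icc 0 ℓ)) (hcpos : ∀ y ∈ Icc 0 ℓ, 0 < c y)
    (hσ : ∀ m, 0 ≤ σ m) {u : ℕ → Polynomial ℝ} (hu : nipg ℓ M K c σ u u = 0) :
    ∀ m ∈ Finset.Icc 1 M, u m = 0 := by
  set energy := fun m y =>
    K y * (Polynomial.derivative (u m)).eval y * (Polynomial.derivative (u m)).eval y +
      c y * (u m).eval y * (u m).eval y
  have henergy_nonneg : ∀ m ∈ Finset.Icc 1 M, ∀ y ∈ Icc (node ℓ M m) (node ℓ M (m + 1)),
      0 ≤ energy m y := fun m hm y hy => by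
    have hy' := Icc_node_subset hℓ hm hy
    simp only [energy, mul_assoc]
    exact add_nonneg (mul_nonneg (hKnn y hy') (mul_self_nonneg _))
      (mul_nonneg (hcpos y hy').le (mul_self_nonneg _))
  have hlt : ∀ m ∈ Finset.Icc 1 M, node ℓ M m < node ℓ M (m + 1) := fun m hm =>
    node_lt_node_succ hℓ (by have := Finset.mem_Icc.mp hm; omega) m
  have hint_nonneg : ∀ m ∈ Finset.Icc 1 M,
      0 ≤ ∫ y in node ℓ M m..node ℓ M (m + 1), energy m y := fun m hm =>
    intervalIntegral.integral_nonneg (hlt m hm).le (henergy_nonneg m hm)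
  have hjump_nonneg : 0 ≤ ∑ m ∈ Finset.Icc 1 (M + 1), σ m * jump ℓ M u m * jump ℓ M u m :=
    Finset.sum_nonneg fun m _ => by
      rw [mul_assoc]
      exact mul_nonneg (hσ m) (mul_self_nonneg _)
  rw [nipg_self] at hu
  have hint_zero := (Finset.sum_eq_zero_iff_of_nonneg hint_nonneg).mp
    (le_antisymm (by linarith) (Finset.sum_nonneg hint_nonneg))
  intro m hm
  by_contra hum
  obtain ⟨y, hy, hy0⟩ : ∃ y ∈ Icc (node ℓ M m) (node ℓ M (m + 1)), (u m).eval y ≠ 0 := by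
    by_contra! h
    exact hum ((u m).eq_zero_of_infinite_isRoot ((Icc_infinite (hlt m hm)).mono h))
  have hsub := Icc_node_subset hℓ hm
  have hpos : 0 < ∫ y in node ℓ M m..node ℓ M (m + 1), energy m y := by
    refine intervalIntegral.integral_pos (hlt m hm) ?_
      (fun x hx => henergy_nonneg m hm x (Ioc_subset_Icc_self hx)) ⟨y, hy, ?_⟩
    · have hq (q : Polynomial ℝ) :
          ContinuousOn (fun y => q.eval y) (Icc (node ℓ M m) (node ℓ M (m + 1))) :=
        q.continuous.continuousOn
      exact (((hK.mono hsub).mul (hq _)).mul (hq _)).add (((hc.mono hsub).mul (hq _)).mul (hq _))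
    · simp only [energy, mul_assoc]
      exact add_pos_of_nonneg_of_pos (mul_nonneg (hKnn y (hsub hy)) (mul_self_nonneg _))
        (mul_pos (hcpos y (hsub hy)) (mul_self_pos.mpr hy0))
  exact hpos.ne' (hint_zero m hm)

end NIPG

theorem l1nipg_uniqueness_general (α T r : ℝ) (hα : α ∈ Set.Ioo (0 : ℝ) 1) (hT : 0 < T)
    (hr : 1 ≤ r) (N : ℕ) (ℓ : ℝ) (hℓ : 0 < ℓ) (M k : ℕ)
    (a a' b p : ℝ → ℝ)
    (ha : ∀ y ∈ Set.Icc 0 ℓ, HasDerivAt a (a' y) y)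
    (hapos : ∀ y ∈ Set.Icc 0 ℓ, 0 < a y)
    (hb : ContinuousOn b (Set.Icc 0 ℓ)) (hbnn : ∀ y ∈ Set.Icc 0 ℓ, 0 ≤ b y)
    (hppos : ∀ t ∈ Set.Icc 0 T, 0 < p t)
    (σ : ℕ → ℝ) (hσ : ∀ m, 0 ≤ σ m)
    (uh : ℕ → ℕ → Polynomial ℝ)
    (hdeg : ∀ n m, (uh n m).degree ≤ k)
    (h1 : ∀ m ∈ Finset.Icc 1 M, uh 1 m = 0)
    (hscheme : ∀ n, 2 ≤ n → n ≤ N + 1 →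
      ∀ v : ℕ → Polynomial ℝ, (∀ m, (v m).degree ≤ k) →
        nipg ℓ M (fun y => p (tmesh T r N n) * a y)
            (fun y => p (tmesh T r N n) * b y + That α T r N n (n - 1)) σ (uh n) v =
          ∑ m ∈ Finset.Icc 1 M, ∫ y in node ℓ M m..node ℓ M (m + 1),
            (That α T r N n 1 * (uh 1 m).eval y +
                ∑ j ∈ Finset.Icc 2 (n - 1),
                  (That α T r N n j - That α T r N n (j - 1)) * (uh j m).eval y) *
              (v m).eval y) :
    ∀ n, 1 ≤ n → n ≤ N + 1 → ∀ m ∈ Finset.Icc 1 M, uh n m = 0 := by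
  intro n
  induction n using Nat.strong_induction_on with
  | _ n ih =>
  intro hn₁ hn
  obtain rfl | hn₂ := eq_or_lt_of_le hn₁
  · exact h1
  have hr₀ : 0 < r := by linarith
  have hpt := hppos _ (tmesh_mem_Icc hT.le hr₀.le hn₁ hn)
  have hThat := That_pred_pos hα.2 hT hr₀ (by omega : 0 < N) hn₂
  have hrhs := hscheme n hn₂ hn (uh n) (hdeg n)
  have hhistory : ∀ m ∈ Finset.Icc 1 M, ∀ y : ℝ, That α T r N n 1 * (uh 1 m).eval y +
      ∑ j ∈ Finset.Icc 2 (n - 1),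
        (That α T r N n j - That α T r N n (j - 1)) * (uh j m).eval y = 0 := fun m hm y => by
    rw [h1 m hm, Finset.sum_eq_zero fun j hj => by
      have := Finset.mem_Icc.mp hj
      rw [ih j (by omega) (by omega) (by omega) m hm, Polynomial.eval_zero, mul_zero]]
    simp
  rw [Finset.sum_eq_zero fun m hm => by simp [hhistory m hm]] at hrhs
  refine eq_zero_of_nipg_self_eq_zero hℓ ?_ (fun y hy => (mul_pos hpt (hapos y hy)).le)
    (continuousOn_const.mul hb |>.add continuousOn_const)
    (fun y hy => add_pos_of_nonneg_of_pos (mul_nonneg hpt.le (hbnn y hy)) hThat) hσ hrhs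
  exact continuousOn_const.mul fun y hy => (ha y hy).continuousAt.continuousWithinAt

/-- uniqueness for the fully discrete L1-NIPG scheme: if `u_h^1 = 0`
and `u_h^2,…,u_h^{N+1}` solve the homogeneous scheme, then `u_h^n = 0` for every `n`;
in particular the scheme has at most one solution. -/
theorem l1nipg_uniqueness (α T r : ℝ) (hα : α ∈ Set.Ioo (0 : ℝ) 1) (hT : 0 < T)
    (hr : 1 ≤ r) (N : ℕ) (hN : 0 < N) (ℓ : ℝ) (hℓ : 0 < ℓ) (M k : ℕ) (hM : 1 ≤ M)
    (hk : 1 ≤ k) (a a' b p : ℝ → ℝ)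
    (ha : ∀ y ∈ Set.Icc 0 ℓ, HasDerivAt a (a' y) y)
    (ha' : ContinuousOn a' (Set.Icc 0 ℓ))
    (hapos : ∀ y ∈ Set.Icc 0 ℓ, 0 < a y)
    (hb : ContinuousOn b (Set.Icc 0 ℓ)) (hbnn : ∀ y ∈ Set.Icc 0 ℓ, 0 ≤ b y)
    (hp : ContinuousOn p (Set.Icc 0 T)) (hppos : ∀ t ∈ Set.Icc 0 T, 0 < p t)
    (σ : ℕ → ℝ) (hσ : ∀ m, 0 ≤ σ m)
    (uh : ℕ → ℕ → Polynomial ℝ)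
    (hdeg : ∀ n m, (uh n m).degree ≤ k)
    (h1 : ∀ m ∈ Finset.Icc 1 M, uh 1 m = 0)
    (hscheme : ∀ n, 2 ≤ n → n ≤ N + 1 →
      ∀ v : ℕ → Polynomial ℝ, (∀ m, (v m).degree ≤ k) →
        nipg ℓ M (fun y => p (tmesh T r N n) * a y)
            (fun y => p (tmesh T r N n) * b y + That α T r N n (n - 1)) σ (uh n) v =
          ∑ m ∈ Finset.Icc 1 M, ∫ y in node ℓ M m..node ℓ M (m + 1),
            (That α T r N n 1 * (uh 1 m).eval y +
                ∑ j ∈ Finset.Icc 2 (n - 1),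
                  (That α T r N n j - That α T r N n (j - 1)) * (uh j m).eval y) *
              (v m).eval y) :
    ∀ n, 1 ≤ n → n ≤ N + 1 → ∀ m ∈ Finset.Icc 1 M, uh n m = 0 :=
  l1nipg_uniqueness_general α T r hα hT hr N ℓ hℓ M k a a' b p ha hapos hb hbnn hppos σ hσ uh hdeg
    h1 hscheme
end
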